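/- Suppose W and Y are positive random variables with Y stochastically dominating W₀Y₀ + W₁Y₁ ((Y₀,Y₁) independent copies of Y, independent of (W₀,W₁), W₀ ≅ W₁ ≅ W), and there exist γ > 1, c > 0, x' ∈ (0,1) with P(W ≤ x) ≤ exp(-c(log 1/x)^γ) for all 0 < x ≤ x'. Assume also E[W^{-q}] < ∞ for all q > 0. Then for every α ∈ [1, γ) there exist c_α, t_α > 0 such that E[e^{-tY}] ≤ exp(-c_α (log t)^α) for all t ≥ t_α. -/

import Mathlib

/-!
Write `ψ t = 𝔼[exp (-t Y)]`. Stochastic domination and independence give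
`ψ t ≤ 𝔼[ψ (t W₀) ψ (t W₁)] ≤ (𝔼[ψ (t W₀) ^ 2] + 𝔼[ψ (t W₁) ^ 2]) / 2`, and bounding `ψ (t w)` by
`1` for `w ≤ δ` and by `ψ (t δ)` otherwise yields `ψ t ≤ ℙ(W ≤ δ) + ψ (t δ) ^ 2`. In logarithmic
coordinates `f u = ψ (exp u)` this reads `f u ≤ ℙ(W ≤ exp (-v)) + f (u - v) ^ 2`.

Since `f` is antitone, its limit `L` satisfies `L ≤ L ^ 2` and `L ≤ f 0 < 1`, so `f → 0`. Then take
`v = (1 - r) u` with `2 r ^ α > 1`: because `α < γ`, the tail term `exp (-c ((1 - r) u) ^ γ)` is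
negligible against `exp (-C u ^ α)`, while squaring the bound `exp (-C (r u) ^ α)` gains the factor
`2 r ^ α` in the exponent. Hence `f u ≤ exp (-C u ^ α)` propagates from `[u₀, u₀ / r]` to all
`u ≥ u₀`.
-/

open MeasureTheory ProbabilityTheory Real
open scoped ProbabilityTheory
open Filter Topology Set

section Probabilistic

variable {Ω : Type*} {mΩ : MeasurableSpace Ω} {μ : Measure Ω} {X : Ω → ℝ}

theorem integrable_exp_mul_of_nonpos_of_nonneg [IsFiniteMeasure μ] (hXm : AEMeasurable X μ)
    (hX : 0 ≤ᵐ[μ] X) {t : ℝ} (ht : t ≤ 0) : Integrable (fun ω => exp (t * X ω)) μ :=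
  .of_bound (hXm.const_mul t).exp.aestronglyMeasurable 1 <| by
    filter_upwards [hX] with ω hω
    rw [norm_of_nonneg (exp_pos _).le, exp_le_one_iff]
    exact mul_nonpos_of_nonpos_of_nonneg ht hω

theorem monotoneOn_mgf_of_nonneg [IsFiniteMeasure μ] (hXm : AEMeasurable X μ) (hX : 0 ≤ᵐ[μ] X) :
    MonotoneOn (mgf X μ) (Iic 0) := fun s hs t ht hst =>
  integral_mono_ae (integrable_exp_mul_of_nonpos_of_nonneg hXm hX hs)
    (integrable_exp_mul_of_nonpos_of_nonneg hXm hX ht) <| by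
      filter_upwards [hX] with ω hω using exp_le_exp.2 (mul_le_mul_of_nonneg_right hst hω)

theorem mgf_le_one_of_nonneg [IsProbabilityMeasure μ] (hXm : AEMeasurable X μ) (hX : 0 ≤ᵐ[μ] X)
    {t : ℝ} (ht : t ≤ 0) : mgf X μ t ≤ 1 :=
  mgf_zero (X := X) (μ := μ) ▸ monotoneOn_mgf_of_nonneg hXm hX ht (mem_Iic.2 le_rfl) ht

theorem mgf_lt_one_of_pos [IsProbabilityMeasure μ] (hXm : AEMeasurable X μ)
    (hX : ∀ᵐ ω ∂μ, 0 < X ω) {t : ℝ} (ht : t < 0) : mgf X μ t < 1 := by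
  have hint := integrable_exp_mul_of_nonpos_of_nonneg hXm (hX.mono fun _ => le_of_lt) ht.le
  have hlt : ∀ᵐ ω ∂μ, 0 < 1 - exp (t * X ω) := by
    filter_upwards [hX] with ω hω
    exact sub_pos.2 (exp_lt_one_iff.2 (mul_neg_of_neg_of_pos ht hω))
  have hpos : 0 < ∫ ω, (1 - exp (t * X ω)) ∂μ := by
    rw [integral_pos_iff_support_of_nonneg_ae (hlt.mono fun _ => le_of_lt)
      ((integrable_const 1).sub hint)]
    have hcompl : μ (Function.support fun ω => 1 - exp (t * X ω))ᶜ = 0 :=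
      ae_iff.1 (hlt.mono fun _ h => h.ne')
    have := measure_univ_le_add_compl (μ := μ) (Function.support fun ω => 1 - exp (t * X ω))
    rw [hcompl, add_zero, measure_univ] at this
    exact zero_lt_one.trans_le this
  rw [integral_sub (integrable_const 1) hint, integral_const, probReal_univ, one_smul] at hpos
  exact sub_pos.1 hpos

theorem mgf_le_mgf_of_measure_le [IsProbabilityMeasure μ] {Y : Ω → ℝ} (hX : Measurable X)
    (hY : Measurable Y) (hXY : ∀ y, μ {ω | y ≤ X ω} ≤ μ {ω | y ≤ Y ω}) {t : ℝ} (ht : t < 0)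
    (hint : Integrable (fun ω => exp (t * X ω)) μ) : mgf Y μ t ≤ mgf X μ t := by
  have hlevel : ∀ u : ℝ, μ {ω | u < exp (t * Y ω)} ≤ μ {ω | u < exp (t * X ω)} := by
    intro u
    rcases le_or_gt u 0 with hu | hu
    · have huniv : ∀ Z : Ω → ℝ, {ω | u < exp (t * Z ω)} = univ := fun Z =>
        eq_univ_of_forall fun ω => hu.trans_lt (exp_pos _)
      rw [huniv, huniv]
    · have hcompl : ∀ Z : Ω → ℝ, {ω | u < exp (t * Z ω)} = {ω | log u / t ≤ Z ω}ᶜ := by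
        intro Z
        ext ω
        rw [mem_ofPred_eq, mem_compl_iff, mem_ofPred_eq, not_le, ← log_lt_iff_lt_exp hu,
          lt_div_iff_of_neg ht, mul_comm]
      rw [hcompl, hcompl, prob_compl_eq_one_sub (measurableSet_le measurable_const hY),
        prob_compl_eq_one_sub (measurableSet_le measurable_const hX)]
      exact tsub_le_tsub_left (hXY _) 1
  have hpos : ∀ Z : Ω → ℝ, 0 ≤ᵐ[μ] fun ω => exp (t * Z ω) := fun Z =>
    ae_of_all _ fun ω => (exp_pos _).le
  have hmeas : ∀ {Z : Ω → ℝ}, Measurable Z → AEMeasurable (fun ω => exp (t * Z ω)) μ :=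
    fun hZ => (hZ.const_mul t).exp.aemeasurable
  rw [mgf, mgf, integral_eq_lintegral_of_nonneg_ae (hpos Y) (hmeas hY).aestronglyMeasurable,
    integral_eq_lintegral_of_nonneg_ae (hpos X) (hmeas hX).aestronglyMeasurable]
  refine ENNReal.toReal_mono hint.lintegral_lt_top.ne ?_
  rw [lintegral_eq_lintegral_meas_lt μ (hpos Y) (hmeas hY),
    lintegral_eq_lintegral_meas_lt μ (hpos X) (hmeas hX)]
  exact lintegral_mono fun u => hlevel u

theorem ProbabilityTheory.IndepFun.integral_comp_eq_integral_integral {β γ E : Type*}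
    [MeasurableSpace β] [MeasurableSpace γ] [NormedAddCommGroup E] [NormedSpace ℝ E]
    [IsFiniteMeasure μ]
    {V : Ω → β} {U : Ω → γ} (hVU : IndepFun V U μ) (hV : Measurable V) (hU : Measurable U)
    {F : β × γ → E} (hF : StronglyMeasurable F) (hFi : Integrable (fun ω => F (V ω, U ω)) μ) :
    ∫ ω, F (V ω, U ω) ∂μ = ∫ ω, ∫ ω', F (V ω', U ω) ∂μ ∂μ := by
  have hmap := hVU.map_prod_eq_prod_map_map hV.aemeasurable hU.aemeasurable
  have hVU' : Measurable fun ω => (V ω, U ω) := hV.prodMk hU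
  have hFi' : Integrable F ((μ.map V).prod (μ.map U)) := by
    rw [← hmap]; exact (integrable_map_measure hF.aestronglyMeasurable hVU'.aemeasurable).2 hFi
  calc ∫ ω, F (V ω, U ω) ∂μ = ∫ z, F z ∂((μ.map V).prod (μ.map U)) := by
        rw [← hmap, integral_map hVU'.aemeasurable hF.aestronglyMeasurable]
    _ = ∫ u, ∫ v, F (v, u) ∂(μ.map V) ∂(μ.map U) := integral_prod_symm F hFi'
    _ = ∫ ω, ∫ v, F (v, U ω) ∂(μ.map V) ∂μ :=
        integral_map hU.aemeasurable hF.integral_prod_left'.aestronglyMeasurable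
    _ = ∫ ω, ∫ ω', F (V ω', U ω) ∂μ ∂μ := by
        congr with ω
        exact integral_map hV.aemeasurable
          (hF.comp_measurable measurable_prodMk_right).aestronglyMeasurable

theorem mgf_mul_add_mul_eq_integral [IsFiniteMeasure μ] {Y₀ Y₁ W₀ W₁ : Ω → ℝ}
    (hY₀ : Measurable Y₀) (hY₁ : Measurable Y₁) (hW₀ : Measurable W₀) (hW₁ : Measurable W₁)
    (hY₀Y₁ : IndepFun Y₀ Y₁ μ)
    (hYW : IndepFun (fun ω => (Y₀ ω, Y₁ ω)) (fun ω => (W₀ ω, W₁ ω)) μ) {t : ℝ}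
    (hint : Integrable (fun ω => exp (t * (W₀ ω * Y₀ ω + W₁ ω * Y₁ ω))) μ) :
    mgf (fun ω => W₀ ω * Y₀ ω + W₁ ω * Y₁ ω) μ t =
      ∫ ω, mgf Y₀ μ (t * W₀ ω) * mgf Y₁ μ (t * W₁ ω) ∂μ := by
  have hF : StronglyMeasurable fun z : (ℝ × ℝ) × (ℝ × ℝ) =>
      exp (t * (z.2.1 * z.1.1 + z.2.2 * z.1.2)) :=
    (by fun_prop : Continuous _).stronglyMeasurable
  refine (hYW.integral_comp_eq_integral_integral (hY₀.prodMk hY₁) (hW₀.prodMk hW₁) hF hint).trans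
    (integral_congr_ae (ae_of_all _ fun ω => ?_))
  simp_rw [mul_add, exp_add, ← mul_assoc]
  exact (hY₀Y₁.exp_mul _ _).integral_mul_eq_mul_integral
    (hY₀.const_mul _).exp.aestronglyMeasurable (hY₁.const_mul _).exp.aestronglyMeasurable

theorem sq_mgf_neg_mul_le_indicator_add_sq [IsProbabilityMeasure μ] {Y : Ω → ℝ}
    (hYm : AEMeasurable Y μ) (hY : 0 ≤ᵐ[μ] Y) {t δ w : ℝ} (ht : 0 ≤ t) (hδ : 0 ≤ δ) (hw : 0 ≤ w) :
    mgf Y μ (-t * w) ^ 2 ≤ (Iic δ).indicator 1 w + mgf Y μ (-t * δ) ^ 2 := by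
  by_cases hwδ : w ≤ δ
  · have : mgf Y μ (-t * w) ≤ 1 :=
      mgf_le_one_of_nonneg hYm hY (mul_nonpos_of_nonpos_of_nonneg (neg_nonpos.2 ht) hw)
    rw [indicator_of_mem (mem_Iic.2 hwδ), Pi.one_apply]
    nlinarith [mgf_nonneg (X := Y) (μ := μ) (t := -t * w), sq_nonneg (mgf Y μ (-t * δ))]
  · have : mgf Y μ (-t * w) ≤ mgf Y μ (-t * δ) :=
      monotoneOn_mgf_of_nonneg hYm hY (mul_nonpos_of_nonpos_of_nonneg (neg_nonpos.2 ht) hw)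
        (mul_nonpos_of_nonpos_of_nonneg (neg_nonpos.2 ht) hδ)
        (mul_le_mul_of_nonpos_left (not_le.1 hwδ).le (neg_nonpos.2 ht))
    rw [indicator_of_notMem (notMem_Iic.2 (not_le.1 hwδ)), zero_add]
    exact pow_le_pow_left₀ mgf_nonneg this 2

theorem integral_mgf_neg_mul_mul_le [IsProbabilityMeasure μ] {W W₀ W₁ Y : Ω → ℝ}
    (hW : Measurable W) (hYm : AEMeasurable Y μ) (hW_nonneg : 0 ≤ᵐ[μ] W) (hY : 0 ≤ᵐ[μ] Y)
    (hW₀d : IdentDistrib W₀ W μ μ) (hW₁d : IdentDistrib W₁ W μ μ) {t δ : ℝ} (ht : 0 ≤ t)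
    (hδ : 0 ≤ δ) :
    ∫ ω, mgf Y μ (-t * W₀ ω) * mgf Y μ (-t * W₁ ω) ∂μ ≤
      μ.real {ω | W ω ≤ δ} + mgf Y μ (-t * δ) ^ 2 := by
  set h : ℝ → ℝ := fun w => (Iic δ).indicator 1 w + mgf Y μ (-t * δ) ^ 2
  have hh : Measurable h := (measurable_const.indicator measurableSet_Iic).add_const _
  have hhW : (fun ω => h (W ω)) = fun ω => (W ⁻¹' Iic δ).indicator 1 ω + mgf Y μ (-t * δ) ^ 2 := by
    ext ω; simp [h, indicator]
  have hind_int : Integrable ((W ⁻¹' Iic δ).indicator (1 : Ω → ℝ)) μ :=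
    (integrable_const 1).indicator (hW measurableSet_Iic)
  have hhW_int : Integrable (fun ω => h (W ω)) μ := by
    rw [hhW]; exact hind_int.add (integrable_const _)
  have hhZ_int : ∀ {Z : Ω → ℝ}, IdentDistrib Z W μ μ → Integrable (fun ω => h (Z ω)) μ :=
    fun hZ => (hZ.comp hh).integrable_iff.2 hhW_int
  have hhZ_eq : ∀ {Z : Ω → ℝ}, IdentDistrib Z W μ μ → ∫ ω, h (Z ω) ∂μ = ∫ ω, h (W ω) ∂μ :=
    fun hZ => (hZ.comp hh).integral_eq
  calc ∫ ω, mgf Y μ (-t * W₀ ω) * mgf Y μ (-t * W₁ ω) ∂μ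
      ≤ ∫ ω, (h (W₀ ω) + h (W₁ ω)) / 2 ∂μ := by
        refine integral_mono_of_nonneg (ae_of_all _ fun ω => mul_nonneg mgf_nonneg mgf_nonneg)
          (((hhZ_int hW₀d).add (hhZ_int hW₁d)).div_const 2) ?_
        filter_upwards [hW₀d.symm.ae_mem_snd measurableSet_Ici hW_nonneg,
          hW₁d.symm.ae_mem_snd measurableSet_Ici hW_nonneg] with ω h₀ h₁
        -- only the marginal laws of `W₀` and `W₁` are needed after this AM-GM step
        have := two_mul_le_add_sq (mgf Y μ (-t * W₀ ω)) (mgf Y μ (-t * W₁ ω))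
        have := sq_mgf_neg_mul_le_indicator_add_sq hYm hY ht hδ h₀
        have := sq_mgf_neg_mul_le_indicator_add_sq hYm hY ht hδ h₁
        simp only [h]
        linarith
    _ = ∫ ω, h (W ω) ∂μ := by
        rw [integral_div, integral_add (hhZ_int hW₀d) (hhZ_int hW₁d), hhZ_eq hW₀d, hhZ_eq hW₁d]
        ring
    _ = μ.real {ω | W ω ≤ δ} + mgf Y μ (-t * δ) ^ 2 := by
        rw [hhW, integral_add hind_int (integrable_const _), integral_indicator_one
          (hW measurableSet_Iic), integral_const, probReal_univ, one_smul]
        rfl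

theorem mgf_neg_le_measureReal_add_sq [IsProbabilityMeasure μ] {W Y W₀ W₁ Y₀ Y₁ : Ω → ℝ}
    (hW : Measurable W) (hY : Measurable Y) (hW₀ : Measurable W₀) (hW₁ : Measurable W₁)
    (hY₀ : Measurable Y₀) (hY₁ : Measurable Y₁) (hW_nonneg : 0 ≤ᵐ[μ] W)
    (hY_nonneg : 0 ≤ᵐ[μ] Y) (hY₀Y₁ : IndepFun Y₀ Y₁ μ)
    (hYW : IndepFun (fun ω => (Y₀ ω, Y₁ ω)) (fun ω => (W₀ ω, W₁ ω)) μ)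
    (hW₀d : IdentDistrib W₀ W μ μ) (hW₁d : IdentDistrib W₁ W μ μ)
    (hY₀d : IdentDistrib Y₀ Y μ μ) (hY₁d : IdentDistrib Y₁ Y μ μ)
    (hdom : ∀ y, μ {ω | y ≤ W₀ ω * Y₀ ω + W₁ ω * Y₁ ω} ≤ μ {ω | y ≤ Y ω})
    {t δ : ℝ} (ht : 0 < t) (hδ : 0 ≤ δ) :
    mgf Y μ (-t) ≤ μ.real {ω | W ω ≤ δ} + mgf Y μ (-t * δ) ^ 2 := by
  have hS_nonneg : 0 ≤ᵐ[μ] fun ω => W₀ ω * Y₀ ω + W₁ ω * Y₁ ω := by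
    filter_upwards [hW₀d.symm.ae_mem_snd measurableSet_Ici hW_nonneg,
      hW₁d.symm.ae_mem_snd measurableSet_Ici hW_nonneg,
      hY₀d.symm.ae_mem_snd measurableSet_Ici hY_nonneg,
      hY₁d.symm.ae_mem_snd measurableSet_Ici hY_nonneg] with ω h₀ h₁ h₂ h₃
    exact add_nonneg (mul_nonneg h₀ h₂) (mul_nonneg h₁ h₃)
  have hS : Measurable fun ω => W₀ ω * Y₀ ω + W₁ ω * Y₁ ω := (hW₀.mul hY₀).add (hW₁.mul hY₁)
  have hint := integrable_exp_mul_of_nonpos_of_nonneg hS.aemeasurable hS_nonneg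
    (neg_nonpos.2 ht.le)
  calc mgf Y μ (-t)
      ≤ mgf (fun ω => W₀ ω * Y₀ ω + W₁ ω * Y₁ ω) μ (-t) :=
        mgf_le_mgf_of_measure_le hS hY hdom (neg_neg_of_pos ht) hint
    _ = ∫ ω, mgf Y μ (-t * W₀ ω) * mgf Y μ (-t * W₁ ω) ∂μ := by
        rw [mgf_mul_add_mul_eq_integral hY₀ hY₁ hW₀ hW₁ hY₀Y₁ hYW hint,
          mgf_congr_identDistrib hY₀d, mgf_congr_identDistrib hY₁d]
    _ ≤ μ.real {ω | W ω ≤ δ} + mgf Y μ (-t * δ) ^ 2 :=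
        integral_mgf_neg_mul_mul_le hW hY.aemeasurable hW_nonneg hY_nonneg hW₀d hW₁d ht.le hδ

end Probabilistic

theorem exists_mem_Ioo_one_lt_two_mul_rpow {α : ℝ} (hα : 0 < α) :
    ∃ r ∈ Ioo (0 : ℝ) 1, 1 < 2 * r ^ α := by
  have h : Tendsto (fun r : ℝ => 2 * r ^ α) (𝓝[<] 1) (𝓝 2) := by
    have := ((continuous_id.rpow_const fun _ => Or.inr hα.le).const_mul (2 : ℝ)).tendsto 1
    simpa using this.mono_left nhdsWithin_le_nhds
  exact (Eventually.and (Ioo_mem_nhdsLT zero_lt_one) (h.eventually (lt_mem_nhds one_lt_two))).exists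

theorem mul_rpow_add_le_mul_rpow {C K L c u₀ u α γ : ℝ} (hu₀ : 1 ≤ u₀) (hu : u₀ ≤ u)
    (hα : 0 ≤ α) (hαγ : α ≤ γ) (hc : 0 ≤ c) (hL : 0 ≤ L) (hCK : C ≤ K)
    (hK : K + L ≤ c * u₀ ^ (γ - α)) :
    C * u ^ α + L ≤ c * u ^ γ := by
  have hu1 : 1 ≤ u ^ α := one_le_rpow (hu₀.trans hu) hα
  calc C * u ^ α + L ≤ (K + L) * u ^ α := by nlinarith
    _ ≤ c * u₀ ^ (γ - α) * u ^ α := by gcongr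
    _ ≤ c * u ^ (γ - α) * u ^ α := by gcongr
    _ = c * u ^ γ := by rw [mul_assoc, ← rpow_add (by linarith), sub_add_cancel]

theorem le_exp_neg_of_le_add_sq {f g : ℝ → ℝ} (hf0 : 0 ≤ f)
    (hfg : ∀ u v, f u ≤ g v + f (u - v) ^ 2) {u v a b : ℝ} (hg : g v ≤ exp (-(a + log 2)))
    (hfuv : f (u - v) ≤ exp (-b)) (hab : a + log 2 ≤ 2 * b) : f u ≤ exp (-a) := by
  have half : exp (-(a + log 2)) = exp (-a) / 2 := by
    rw [neg_add, exp_add, exp_neg (log 2), exp_log two_pos, div_eq_mul_inv]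
  have hsq : f (u - v) ^ 2 ≤ exp (-a) / 2 := calc
    f (u - v) ^ 2 ≤ exp (-b) ^ 2 := pow_le_pow_left₀ (hf0 _) hfuv 2
    _ = exp (-(2 * b)) := by rw [← exp_nat_mul]; ring_nf
    _ ≤ exp (-a) / 2 := half ▸ exp_le_exp.2 (by linarith)
  linarith [hfg u v]

theorem forall_ge_of_le_div_of_mul_imp {P : ℝ → Prop} {r u₀ : ℝ} (hr0 : 0 < r) (hr1 : r < 1)
    (hu₀ : 0 < u₀) (base : ∀ u, u₀ ≤ u → u ≤ u₀ / r → P u)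
    (step : ∀ u, u₀ ≤ u → P (r * u) → P u) : ∀ u, u₀ ≤ u → P u := by
  have hn : ∀ n : ℕ, ∀ u, u₀ ≤ u → u ≤ u₀ / r ^ n → P u := by
    intro n
    induction n with
    | zero =>
      intro u hu hun
      rw [pow_zero, div_one] at hun
      exact base u hu (hun.trans (le_div_self hu₀.le hr0 hr1.le))
    | succ n ih =>
      intro u hu hun
      by_cases hur : u ≤ u₀ / r
      · exact base u hu hur
      refine step u hu (ih _ ?_ ?_)
      · rw [not_le, div_lt_iff₀ hr0] at hur; linarith
      · rw [pow_succ, ← div_div, le_div_iff₀ hr0] at hun; linarith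
  intro u hu
  obtain ⟨n, hn'⟩ := exists_pow_lt_of_lt_one (div_pos hu₀ (hu₀.trans_le hu)) hr1
  rw [lt_div_iff₀ (hu₀.trans_le hu)] at hn'
  exact hn n u hu ((le_div_iff₀ (by positivity)).2 (by linarith))

theorem tendsto_atTop_zero_of_le_add_sq {f g : ℝ → ℝ} (hf : Antitone f) (hf0 : 0 ≤ f) {u₁ : ℝ}
    (hu₁ : f u₁ < 1) (hfg : ∀ u v, f u ≤ g v + f (u - v) ^ 2) (hg : ∀ ε > 0, ∃ v, g v ≤ ε) :
    Tendsto f atTop (𝓝 0) := by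
  have hbdd : BddBelow (range f) := ⟨0, by rintro _ ⟨u, rfl⟩; exact hf0 u⟩
  set L := ⨅ u, f u
  have hL : Tendsto f atTop (𝓝 L) := tendsto_atTop_ciInf hf hbdd
  have hL0 : 0 ≤ L := le_ciInf hf0
  have hLu₁ : L ≤ f u₁ := ciInf_le hbdd u₁
  have hLg : ∀ v, L ≤ g v + L ^ 2 := fun v =>
    le_of_tendsto_of_tendsto' hL
      (((hL.comp (tendsto_atTop_add_const_right _ (-v) tendsto_id)).pow 2).const_add (g v))
      fun u => hfg u v
  have hLε : L * (1 - f u₁) ≤ 0 := le_of_forall_pos_le_add fun ε hε => by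
    obtain ⟨v, hv⟩ := hg ε hε
    nlinarith [hLg v]
  have : L = 0 := le_antisymm (nonpos_of_mul_nonpos_left hLε (by linarith)) hL0
  exact this ▸ hL

theorem exists_le_exp_neg_mul_rpow_of_tendsto_of_le_add_sq {f g : ℝ → ℝ} (hf : Antitone f)
    (hf0 : 0 ≤ f) (hf_lim : Tendsto f atTop (𝓝 0)) (hfg : ∀ u v, f u ≤ g v + f (u - v) ^ 2)
    {c γ α : ℝ} (hc : 0 < c) (hα : 0 < α) (hαγ : α < γ)
    (hg : ∀ᶠ v in atTop, g v ≤ exp (-c * v ^ γ)) :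
    ∃ C > 0, ∃ u₀, ∀ u, u₀ ≤ u → f u ≤ exp (-C * u ^ α) := by
  obtain ⟨r, ⟨hr0, hr1⟩, hr⟩ := exists_mem_Ioo_one_lt_two_mul_rpow hα
  obtain ⟨v₀, hv₀⟩ := eventually_atTop.1 hg
  -- for `a ≥ K`, `exp (-r ^ α a) ^ 2 ≤ exp (-a) / 2`
  set K := log 2 / (2 * r ^ α - 1)
  have hK : (2 * r ^ α - 1) * K = log 2 := mul_div_cancel₀ _ (by linarith)
  have hK0 : 0 < K := div_pos (log_pos one_lt_two) (by linarith)
  obtain ⟨u₀, hu₀1, hu₀v, hu₀f, hu₀c⟩ : ∃ u₀, 1 ≤ u₀ ∧ v₀ ≤ (1 - r) * u₀ ∧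
      f u₀ ≤ exp (-(2 * K)) ∧ K + log 2 ≤ c * (1 - r) ^ γ * u₀ ^ (γ - α) :=
    ((eventually_ge_atTop 1).and <|
      ((tendsto_id.const_mul_atTop (sub_pos.2 hr1)).eventually_ge_atTop v₀).and <|
      ((tendsto_order.1 hf_lim).2 _ (exp_pos _) |>.mono fun _ => le_of_lt).and <|
      ((tendsto_rpow_atTop (sub_pos.2 hαγ)).const_mul_atTop (by positivity)).eventually_ge_atTop
        _).exists
  set C := K / u₀ ^ α
  have hCu₀ : C * u₀ ^ α = K := div_mul_cancel₀ _ (by positivity)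
  have hKC : ∀ u, u₀ ≤ u → K ≤ C * u ^ α := fun u hu =>
    hCu₀ ▸ mul_le_mul_of_nonneg_left (rpow_le_rpow (by linarith) hu hα.le) (by positivity)
  refine ⟨C, by positivity, u₀, forall_ge_of_le_div_of_mul_imp hr0 hr1 (by linarith) ?_ ?_⟩
  · intro u hu hur
    have hCu : C * u ^ α ≤ 2 * K := calc
      C * u ^ α ≤ C * (u₀ / r) ^ α := by gcongr; linarith
      _ = K / r ^ α := by rw [div_rpow (by linarith) hr0.le, mul_div_assoc', hCu₀]
      _ ≤ 2 * K := by rw [div_le_iff₀ (by positivity)]; nlinarith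
    calc f u ≤ f u₀ := hf hu
      _ ≤ exp (-(2 * K)) := hu₀f
      _ ≤ exp (-C * u ^ α) := exp_le_exp.2 (by linarith)
  · intro u hu hru
    have htail : C * u ^ α + log 2 ≤ c * (1 - r) ^ γ * u ^ γ :=
      mul_rpow_add_le_mul_rpow hu₀1 hu hα.le hαγ.le (by positivity) (log_pos one_lt_two).le
        (div_le_self hK0.le (one_le_rpow hu₀1 hα.le)) hu₀c
    rw [neg_mul]
    refine le_exp_neg_of_le_add_sq (v := (1 - r) * u) (b := C * (r * u) ^ α) hf0 hfg ?_
      (by rw [← neg_mul, show u - (1 - r) * u = r * u by ring]; exact hru) ?_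
    · refine (hv₀ _ (hu₀v.trans (by gcongr))).trans (exp_le_exp.2 ?_)
      rw [mul_rpow (by linarith) (by linarith)]
      linarith
    · rw [mul_rpow hr0.le (by linarith)]
      nlinarith [hKC u hu]

theorem exists_le_exp_neg_mul_rpow_of_le_add_sq {f g : ℝ → ℝ} (hf : Antitone f) (hf0 : 0 ≤ f)
    {u₁ : ℝ} (hu₁ : f u₁ < 1) (hfg : ∀ u v, f u ≤ g v + f (u - v) ^ 2)
    {c γ α : ℝ} (hc : 0 < c) (hα : 0 < α) (hαγ : α < γ)
    (hg : ∀ᶠ v in atTop, g v ≤ exp (-c * v ^ γ)) :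
    ∃ C > 0, ∃ u₀, ∀ u, u₀ ≤ u → f u ≤ exp (-C * u ^ α) := by
  have hg_small : ∀ ε > 0, ∃ v, g v ≤ ε := fun ε hε => by
    have hlim : Tendsto (fun v => exp (-c * v ^ γ)) atTop (𝓝 0) := by
      simpa only [Function.comp_def, neg_mul] using tendsto_exp_neg_atTop_nhds_zero.comp
        ((tendsto_rpow_atTop (hα.trans hαγ)).const_mul_atTop hc)
    obtain ⟨v, hv, hvε⟩ := (hg.and (hlim.eventually (gt_mem_nhds hε))).exists
    exact ⟨v, hv.trans hvε.le⟩
  exact exists_le_exp_neg_mul_rpow_of_tendsto_of_le_add_sq hf hf0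
    (tendsto_atTop_zero_of_le_add_sq hf hf0 hu₁ hfg hg_small) hfg hc hα hαγ hg

theorem laplace_upper_bound_main_general
    {Ω : Type*} [MeasureSpace Ω] [IsProbabilityMeasure (ℙ : Measure Ω)]
    (W Y W₀ W₁ Y₀ Y₁ : Ω → ℝ)
    (hWmeas : Measurable W) (hYmeas : Measurable Y)
    (hW₀meas : Measurable W₀) (hW₁meas : Measurable W₁)
    (hY₀meas : Measurable Y₀) (hY₁meas : Measurable Y₁)
    (hWpos : ∀ ω, 0 < W ω) (hYpos : ∀ ω, 0 < Y ω)
    (hY₀Y₁indep : IndepFun Y₀ Y₁ ℙ)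
    (hpairindep : IndepFun (fun ω => (Y₀ ω, Y₁ ω)) (fun ω => (W₀ ω, W₁ ω)) ℙ)
    (hW₀d : IdentDistrib W₀ W ℙ ℙ) (hW₁d : IdentDistrib W₁ W ℙ ℙ)
    (hY₀d : IdentDistrib Y₀ Y ℙ ℙ) (hY₁d : IdentDistrib Y₁ Y ℙ ℙ)
    (hdom : ∀ y : ℝ, ℙ {ω | y ≤ W₀ ω * Y₀ ω + W₁ ω * Y₁ ω} ≤ ℙ {ω | y ≤ Y ω})
    (γ c x' : ℝ) (hc : 0 < c) (hx'0 : 0 < x')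
    (htail : ∀ x : ℝ, 0 < x → x ≤ x' →
      (ℙ {ω | W ω ≤ x}).toReal ≤ Real.exp (-c * (Real.log (1 / x)) ^ γ)) :
    ∀ α : ℝ, 1 ≤ α → α < γ →
      ∃ cα > 0, ∃ tα > 0, ∀ t : ℝ, tα ≤ t →
        ∫ ω, Real.exp (-t * Y ω) ≤ Real.exp (-cα * (Real.log t) ^ α) := by
  intro α hα hαγ
  have hY_nonneg : 0 ≤ᵐ[ℙ] Y := ae_of_all _ fun ω => (hYpos ω).le
  set f : ℝ → ℝ := fun u => mgf Y ℙ (-exp u)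
  set g : ℝ → ℝ := fun v => (ℙ : Measure Ω).real {ω | W ω ≤ exp (-v)}
  have hf : Antitone f := fun u u' huu' =>
    monotoneOn_mgf_of_nonneg hYmeas.aemeasurable hY_nonneg (neg_nonpos.2 (exp_pos _).le)
      (neg_nonpos.2 (exp_pos _).le) (neg_le_neg (exp_le_exp.2 huu'))
  have hfg : ∀ u v, f u ≤ g v + f (u - v) ^ 2 := fun u v => by
    simpa only [f, g, neg_mul, ← exp_add, ← sub_eq_add_neg] using
      mgf_neg_le_measureReal_add_sq hWmeas hYmeas hW₀meas hW₁meas hY₀meas hY₁meas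
        (ae_of_all _ fun ω => (hWpos ω).le) hY_nonneg hY₀Y₁indep hpairindep hW₀d hW₁d hY₀d hY₁d
        hdom (exp_pos u) (exp_pos (-v)).le
  have hg : ∀ᶠ v in atTop, g v ≤ exp (-c * v ^ γ) := by
    filter_upwards [eventually_ge_atTop (log (1 / x'))] with v hv
    have hvx' : exp (-v) ≤ x' := by
      rwa [← le_log_iff_exp_le hx'0, ← neg_le, ← log_inv, ← one_div]
    simpa [g, measureReal_def, one_div, ← exp_neg] using htail _ (exp_pos _) hvx'
  have hf1 : f 0 < 1 :=
    mgf_lt_one_of_pos hYmeas.aemeasurable (ae_of_all _ hYpos) (neg_neg_of_pos (exp_pos 0))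
  obtain ⟨C, hC, u₀, hbound⟩ := exists_le_exp_neg_mul_rpow_of_le_add_sq hf (fun _ => mgf_nonneg)
    hf1 hfg hc (by linarith) hαγ hg
  refine ⟨C, hC, exp u₀, exp_pos _, fun t ht => ?_⟩
  have ht0 : 0 < t := (exp_pos _).trans_le ht
  have := hbound (log t) ((le_log_iff_exp_le ht0).2 ht)
  simp only [f, exp_log ht0] at this
  exact this

theorem laplace_upper_bound_main
    {Ω : Type*} [MeasureSpace Ω] [IsProbabilityMeasure (ℙ : Measure Ω)]
    (W Y W₀ W₁ Y₀ Y₁ : Ω → ℝ)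
    (hWmeas : Measurable W) (hYmeas : Measurable Y)
    (hW₀meas : Measurable W₀) (hW₁meas : Measurable W₁)
    (hY₀meas : Measurable Y₀) (hY₁meas : Measurable Y₁)
    (hWpos : ∀ ω, 0 < W ω) (hYpos : ∀ ω, 0 < Y ω)
    (hY₀Y₁indep : IndepFun Y₀ Y₁ ℙ)
    (hpairindep : IndepFun (fun ω => (Y₀ ω, Y₁ ω)) (fun ω => (W₀ ω, W₁ ω)) ℙ)
    (hW₀d : IdentDistrib W₀ W ℙ ℙ) (hW₁d : IdentDistrib W₁ W ℙ ℙ)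
    (hY₀d : IdentDistrib Y₀ Y ℙ ℙ) (hY₁d : IdentDistrib Y₁ Y ℙ ℙ)
    (hdom : ∀ y : ℝ, ℙ {ω | y ≤ W₀ ω * Y₀ ω + W₁ ω * Y₁ ω} ≤ ℙ {ω | y ≤ Y ω})
    (γ c x' : ℝ) (hγ : 1 < γ) (hc : 0 < c) (hx'0 : 0 < x') (hx'1 : x' < 1)
    (htail : ∀ x : ℝ, 0 < x → x ≤ x' →
      (ℙ {ω | W ω ≤ x}).toReal ≤ Real.exp (-c * (Real.log (1 / x)) ^ γ))
    (hmom : ∀ q : ℝ, 0 < q → Integrable (fun ω => (W ω) ^ (-q)) ℙ) :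
    ∀ α : ℝ, 1 ≤ α → α < γ →
      ∃ cα > 0, ∃ tα > 0, ∀ t : ℝ, tα ≤ t →
        ∫ ω, Real.exp (-t * Y ω) ≤ Real.exp (-cα * (Real.log t) ^ α) :=
  laplace_upper_bound_main_general W Y W₀ W₁ Y₀ Y₁ hWmeas hYmeas hW₀meas hW₁meas hY₀meas hY₁meas
    hWpos hYpos hY₀Y₁indep hpairindep hW₀d hW₁d hY₀d hY₁d hdom γ c x' hc hx'0 htail
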